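/- For any fixed u, v ∈ Σ*, w ∈ Σ^ω, if the residuals of L ⊆ Σ^ω are totally ordered by inclusion, then the membership of u v^i w in L switches at most once as i increases from 0: if there exist i < j with u v^i w ∈ L and u v^j w ∉ L (or vice versa), then for all k ≥ j the membership of u v^k w agrees with that of u v^j w. -/
import Mathlib


def wcat {α : Type*} (u : List α) (x : ℕ → α) : ℕ → α :=
  fun n => if h : n < u.length then u.get ⟨n, h⟩ else x (n - u.length)

def wpow {α : Type*} (v : List α) (n : ℕ) : List α := (List.replicate n v).flatten

def res {α : Type*} (L : Set (ℕ → α)) (u : List α) : Set (ℕ → α) :=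
  {x | wcat u x ∈ L}

lemma wcat_append {α : Type*} (s t : List α) (x : ℕ → α) :
    wcat (s ++ t) x = wcat s (wcat t x) := by
  funext n
  simp only [wcat, List.length_append, List.get_eq_getElem]
  by_cases h1 : n < s.length
  · rw [dif_pos (by omega), dif_pos h1]
    exact List.getElem_append_left h1
  · rw [dif_neg h1]
    by_cases h2 : n < s.length + t.length
    · rw [dif_pos h2, dif_pos (by omega)]
      exact List.getElem_append_right (by omega)
    · rw [dif_neg h2, dif_neg (by omega)]
      congr 1
      omega

lemma res_append {α : Type*} (L : Set (ℕ → α)) (s t : List α) :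
    res L (s ++ t) = res (res L s) t := by
  ext x
  simp [res, wcat_append]

lemma wpow_add {α : Type*} (v : List α) (m n : ℕ) :
    wpow v (m + n) = wpow v m ++ wpow v n := by
  rw [wpow, wpow, wpow, List.replicate_add, List.flatten_append]

/-- If the residuals of `L` are totally ordered by inclusion, then for fixed
`u, v, w` the membership of `u v^i w` in `L` switches at most once as `i`
increases: if membership differs between `i < j`, then for all `k ≥ j` the
membership of `u v^k w` agrees with that of `u v^j w`. -/
theorem stmt1 {σ : Type*} (L : Set (ℕ → σ))
    (hchain : ∀ u v : List σ, res L u ⊆ res L v ∨ res L v ⊆ res L u)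
    (u v : List σ) (w : ℕ → σ) :
    ∀ i j : ℕ, i < j →
      ¬ (wcat (u ++ wpow v i) w ∈ L ↔ wcat (u ++ wpow v j) w ∈ L) →
      ∀ k : ℕ, j ≤ k →
        (wcat (u ++ wpow v k) w ∈ L ↔ wcat (u ++ wpow v j) w ∈ L) := by
  intro i j hij hne k hjk
  set R : ℕ → Set (ℕ → σ) := fun m => res L (u ++ wpow v m) with hR
  have hmem : ∀ m, (wcat (u ++ wpow v m) w ∈ L) ↔ w ∈ R m := fun m => Iff.rfl
  have key : ∀ a e : ℕ, R (a + e) = res (R a) (wpow v e) := by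
    intro a e
    simp only [hR]
    rw [wpow_add, ← List.append_assoc, res_append]
  have shift : ∀ a b e : ℕ, R a ⊆ R b → R (a + e) ⊆ R (b + e) := by
    intro a b e h
    rw [key a e, key b e]
    intro x hx
    exact h hx
  have iterUp : ∀ a d : ℕ, R a ⊆ R (a + d) → ∀ n, R a ⊆ R (a + n * d) := by
    intro a d h n
    induction n with
    | zero => simp
    | succ n ih =>
      have h2 := shift a (a + d) (n * d) h
      have e1 : a + (n + 1) * d = a + d + n * d := by ring
      rw [e1]
      exact ih.trans h2
  have iterDown : ∀ a d : ℕ, R (a + d) ⊆ R a → ∀ n, R (a + n * d) ⊆ R a := by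
    intro a d h n
    induction n with
    | zero => simp
    | succ n ih =>
      have h2 := shift (a + d) a (n * d) h
      have e1 : a + (n + 1) * d = a + d + n * d := by ring
      rw [e1]
      exact h2.trans ih
  rcases Nat.eq_or_lt_of_le hjk with rfl | hk
  · exact Iff.rfl
  obtain ⟨d, rfl⟩ : ∃ d, j = i + (d + 1) := ⟨j - i - 1, by omega⟩
  obtain ⟨e, rfl⟩ : ∃ e, k = i + (d + 1) + (e + 1) := ⟨k - (i + (d + 1)) - 1, by omega⟩
  set j := i + (d + 1) with hj'
  set k := j + (e + 1) with hk'
  rw [hmem, hmem] at hne ⊢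
  by_cases hi : w ∈ R i <;> by_cases hj : w ∈ R j
  · exact absurd (iff_of_true hi hj) hne
  · -- w ∈ R i, w ∉ R j : show w ∉ R k
    have hji : R j ⊆ R i := by
      rcases hchain (u ++ wpow v j) (u ++ wpow v i) with h | h
      · exact h
      · exact absurd (h hi) hj
    constructor
    · intro hk2
      exfalso
      have hjk2 : R j ⊆ R k := by
        rcases hchain (u ++ wpow v j) (u ++ wpow v k) with h | h
        · exact h
        · exact absurd (h hk2) hj
      -- up: R k ⊆ R (k + d * (e+1))
      have up0 : R k ⊆ R (k + (e + 1)) := shift j k (e + 1) hjk2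
      have up : R k ⊆ R (k + d * (e + 1)) := iterUp k (e + 1) up0 d
      -- down: R (j + (e+1) * (d+1)) ⊆ R j
      have dn0 : R (j + (d + 1)) ⊆ R j := shift (i + (d + 1)) i (d + 1) hji
      have dn : R (j + (e + 1) * (d + 1)) ⊆ R j := iterDown j (d + 1) dn0 (e + 1)
      have e1 : k + d * (e + 1) = j + (e + 1) * (d + 1) := by rw [hk']; ring
      rw [e1] at up
      exact hj (dn (up hk2))
    · intro h; exact absurd h hj
  · -- w ∉ R i, w ∈ R j : show w ∈ R k
    have hij2 : R i ⊆ R j := by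
      rcases hchain (u ++ wpow v i) (u ++ wpow v j) with h | h
      · exact h
      · exact absurd (h hj) hi
    rcases hchain (u ++ wpow v j) (u ++ wpow v k) with h | h
    · exact iff_of_true (h hj) hj
    · -- h : R k ⊆ R j
      have up0 : R j ⊆ R (j + (d + 1)) := shift i j (d + 1) hij2
      have up : R j ⊆ R (j + (e + 1) * (d + 1)) := iterUp j (d + 1) up0 (e + 1)
      have dn0 : R (k + (e + 1)) ⊆ R k := shift k j (e + 1) h
      have dn : R (k + d * (e + 1)) ⊆ R k := iterDown k (e + 1) dn0 d
      have e1 : j + (e + 1) * (d + 1) = k + d * (e + 1) := by rw [hk']; ring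
      rw [e1] at up
      exact iff_of_true (dn (up hj)) hj
  · exact absurd (iff_of_false hi hj) hne
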